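/- For all integers k, r ≥ 1, allowing density functions that are sums of a Handelman-type density and an SOS density does not improve on the better of the two bounds: inf { ∫_K f(x) σ(x) dx : ∫_K σ(x) dx = 1, σ ∈ H_k + Σ[x]_r } = min{ f_r^{sos}, f_k^H }, where H_k + Σ[x]_r denotes the set of polynomials expressible as a sum of an element of H_k and an element of Σ[x]_r. -/

import Mathlib

open MvPolynomial MeasureTheory

/-- The polynomial `x^η (1-x)^β` in `n` variables. -/
noncomputable def hbPoly (n : ℕ) (η β : Fin n → ℕ) : MvPolynomial (Fin n) ℝ :=
  (∏ i, (X i) ^ (η i)) * ∏ i, (1 - X i) ^ (β i)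

/-- The Handelman set `H_k`. -/
def Handelman (n k : ℕ) : Set (MvPolynomial (Fin n) ℝ) :=
  { p | ∃ (S : Finset ((Fin n → ℕ) × (Fin n → ℕ))) (lam : (Fin n → ℕ) × (Fin n → ℕ) → ℝ),
      (∀ pr ∈ S, 0 ≤ lam pr) ∧
      (∀ pr ∈ S, (∑ i, pr.1 i) + (∑ i, pr.2 i) = k) ∧
      p = ∑ pr ∈ S, lam pr • hbPoly n pr.1 pr.2 }

/-- The cone `Σ[x]_r` of finite sums of squares of polynomials of degree at most `r`. -/
def SOS (n r : ℕ) : Set (MvPolynomial (Fin n) ℝ) :=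
  { p | ∃ (m : ℕ) (g : Fin m → MvPolynomial (Fin n) ℝ),
      (∀ j, (g j).totalDegree ≤ r) ∧ p = ∑ j, (g j) ^ 2 }

/-- The upper bound `f_k^H` over a set `K`. -/
noncomputable def fkH {n : ℕ} (K : Set (Fin n → ℝ)) (f : MvPolynomial (Fin n) ℝ) (k : ℕ) : ℝ :=
  sInf { r : ℝ | ∃ η β : Fin n → ℕ, (∑ i, η i) + (∑ i, β i) = k ∧
    r = (∫ x in K, eval x f * ∏ i, x i ^ η i * (1 - x i) ^ β i) /
        (∫ x in K, ∏ i, x i ^ η i * (1 - x i) ^ β i) }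

/-- The SOS-density upper bound `f_r^{sos}` over a set `K`. -/
noncomputable def fsos {n : ℕ} (K : Set (Fin n → ℝ)) (f : MvPolynomial (Fin n) ℝ) (r : ℕ) : ℝ :=
  sInf { v : ℝ | ∃ σ ∈ SOS n r, (∫ x in K, eval x σ) = 1 ∧
    v = ∫ x in K, eval x f * eval x σ }

section Aux

variable {n : ℕ}

lemma evalCont (p : MvPolynomial (Fin n) ℝ) : Continuous fun x : Fin n → ℝ => eval x p :=
  MvPolynomial.continuous_eval p

lemma intK {K : Set (Fin n → ℝ)} (hK : IsCompact K) (p : MvPolynomial (Fin n) ℝ) :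
    IntegrableOn (fun x => eval x p) K volume :=
  (evalCont p).continuousOn.integrableOn_compact hK

lemma hb_eval (η β : Fin n → ℕ) (x : Fin n → ℝ) :
    eval x (hbPoly n η β) = ∏ i, x i ^ η i * (1 - x i) ^ β i := by
  simp [hbPoly, ← Finset.prod_mul_distrib]

lemma hb_nonneg (η β : Fin n → ℕ) {x : Fin n → ℝ} (hx : x ∈ Set.Icc (0 : Fin n → ℝ) 1) :
    0 ≤ eval x (hbPoly n η β) := by
  rw [hb_eval]
  refine Finset.prod_nonneg fun i _ => mul_nonneg (pow_nonneg (hx.1 i) _)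
    (pow_nonneg (by have := hx.2 i; simp at this ⊢; linarith) _)

lemma hyperplane_null (i : Fin n) (c : ℝ) : volume {x : Fin n → ℝ | x i = c} = 0 := by
  have : {x : Fin n → ℝ | x i = c} = Function.eval i ⁻¹' ({c} : Set ℝ) := rfl
  rw [this, volume_pi]
  exact MeasureTheory.Measure.pi_eval_preimage_null (fun _ : Fin n => (volume : Measure ℝ))
    (measure_singleton c)

lemma bad_null : volume (⋃ i : Fin n, ({x : Fin n → ℝ | x i = 0} ∪ {x | x i = 1})) = 0 := by
  refine measure_iUnion_null fun i => measure_union_null ?_ ?_ <;> exact hyperplane_null i _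

lemma hb_pos {K : Set (Fin n → ℝ)} (hK : IsCompact K)
    (hK1 : K ⊆ Set.Icc (0 : Fin n → ℝ) 1) (hKpos : 0 < volume K) (η β : Fin n → ℕ) :
    0 < ∫ x in K, eval x (hbPoly n η β) := by
  rw [setIntegral_pos_iff_support_of_nonneg_ae]
  · set Bad := ⋃ i : Fin n, ({x : Fin n → ℝ | x i = 0} ∪ {x | x i = 1}) with hBad
    have hsub : K \ Bad ⊆ Function.support (fun x => eval x (hbPoly n η β)) ∩ K := by
      rintro x ⟨hxK, hxB⟩
      refine ⟨?_, hxK⟩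
      have h1 : ∀ i, x i ≠ 0 ∧ x i ≠ 1 := by
        intro i
        constructor <;> intro h <;> exact hxB (Set.mem_iUnion.2 ⟨i, by simp [h]⟩)
      have hx := hK1 hxK
      simp only [Function.mem_support, hb_eval]
      refine ne_of_gt (Finset.prod_pos fun i _ => mul_pos (pow_pos ?_ _) (pow_pos ?_ _))
      · exact lt_of_le_of_ne (hx.1 i) (Ne.symm (h1 i).1)
      · have h2 : x i ≤ 1 := by have := hx.2 i; simpa using this
        have h3 := (h1 i).2
        rcases lt_or_eq_of_le h2 with h | h
        · linarith
        · exact absurd h h3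
    calc (0:ENNReal) < volume K := hKpos
      _ = volume (K \ Bad) := (measure_diff_null bad_null).symm
      _ ≤ _ := measure_mono hsub
  · filter_upwards [ae_restrict_mem hK.measurableSet] with x hx
    exact hb_nonneg η β (hK1 hx)
  · exact intK hK _

lemma sos_nonneg {r : ℕ} {p : MvPolynomial (Fin n) ℝ} (hp : p ∈ SOS n r) (x : Fin n → ℝ) :
    0 ≤ eval x p := by
  obtain ⟨m, g, -, rfl⟩ := hp
  simp only [map_sum, map_pow]
  exact Finset.sum_nonneg fun j _ => sq_nonneg _

lemma sos_zero {r : ℕ} : (0 : MvPolynomial (Fin n) ℝ) ∈ SOS n r :=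
  ⟨0, fun _ => 0, fun j => by simp, by simp⟩

lemma sos_smul {r : ℕ} {c : ℝ} (hc : 0 ≤ c) {p : MvPolynomial (Fin n) ℝ} (hp : p ∈ SOS n r) :
    c • p ∈ SOS n r := by
  obtain ⟨m, g, hg, rfl⟩ := hp
  refine ⟨m, fun j => C (Real.sqrt c) * g j, fun j => ?_, ?_⟩
  · exact le_trans (totalDegree_mul _ _) (by simpa [totalDegree_C] using hg j)
  · rw [smul_eq_C_mul, Finset.mul_sum]
    refine Finset.sum_congr rfl fun j _ => ?_
    rw [mul_pow, ← map_pow, Real.sq_sqrt hc]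

lemma sos_const {r : ℕ} {c : ℝ} (hc : 0 ≤ c) : (C c : MvPolynomial (Fin n) ℝ) ∈ SOS n r := by
  refine ⟨1, fun _ => C (Real.sqrt c), fun j => by simp [totalDegree_C], ?_⟩
  rw [Finset.sum_const, Finset.card_univ, Fintype.card_fin, one_smul, ← map_pow, Real.sq_sqrt hc]

lemma handelman_zero {k : ℕ} : (0 : MvPolynomial (Fin n) ℝ) ∈ Handelman n k :=
  ⟨∅, fun _ => 0, by simp, by simp, by simp⟩

end Aux
theorem mixed_density_no_improvement
    {n : ℕ} (hn : 1 ≤ n) (K : Set (Fin n → ℝ)) (hK : IsCompact K)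
    (hK1 : K ⊆ Set.Icc (0 : Fin n → ℝ) 1) (hKpos : 0 < volume K)
    (f : MvPolynomial (Fin n) ℝ) (k r : ℕ) (hk : 1 ≤ k) (hr : 1 ≤ r) :
    sInf { v : ℝ | ∃ h ∈ Handelman n k, ∃ s ∈ SOS n r,
        (∫ x in K, eval x (h + s)) = 1 ∧ v = ∫ x in K, eval x f * eval x (h + s) }
      = min (fsos K f r) (fkH K f k) := by
  classical
  have hmK : MeasurableSet K := hK.measurableSet
  obtain ⟨M, hM⟩ := hK.exists_bound_of_continuousOn (evalCont f).continuousOn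
  set Rset : Set ℝ := { r0 : ℝ | ∃ η β : Fin n → ℕ, (∑ i, η i) + (∑ i, β i) = k ∧
    r0 = (∫ x in K, eval x f * ∏ i, x i ^ η i * (1 - x i) ^ β i) /
        (∫ x in K, ∏ i, x i ^ η i * (1 - x i) ^ β i) } with hRset
  set Fset : Set ℝ := { v : ℝ | ∃ σ ∈ SOS n r, (∫ x in K, eval x σ) = 1 ∧
    v = ∫ x in K, eval x f * eval x σ } with hFset
  set Eset : Set ℝ := { v : ℝ | ∃ h ∈ Handelman n k, ∃ s ∈ SOS n r,
        (∫ x in K, eval x (h + s)) = 1 ∧ v = ∫ x in K, eval x f * eval x (h + s) } with hEset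
  have hfkH : fkH K f k = sInf Rset := rfl
  have hfsos : fsos K f r = sInf Fset := rfl
  -- integrability of f * p
  have hIfp : ∀ p : MvPolynomial (Fin n) ℝ,
      IntegrableOn (fun x => eval x f * eval x p) K volume := by
    intro p
    have : (fun x : Fin n → ℝ => eval x f * eval x p) = fun x => eval x (f * p) := by
      funext x; simp
    rw [this]; exact intK hK _
  -- lower bound lemma
  have hA : ∀ p : MvPolynomial (Fin n) ℝ, (∀ x ∈ K, 0 ≤ eval x p) →
      -M * ∫ x in K, eval x p ≤ ∫ x in K, eval x f * eval x p := by
    intro p hp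
    rw [← MeasureTheory.integral_const_mul]
    refine setIntegral_mono_on ((intK hK p).const_mul _) (hIfp p) hmK ?_
    intro x hx
    have h1 : -M ≤ eval x f := by
      have := hM x hx; rw [Real.norm_eq_abs] at this
      linarith [(abs_le.mp this).1]
    exact mul_le_mul_of_nonneg_right h1 (hp x hx)
  -- facts about Rset
  have hRmem : ∀ η β : Fin n → ℕ, (∑ i, η i) + (∑ i, β i) = k →
      ((∫ x in K, eval x f * eval x (hbPoly n η β)) / (∫ x in K, eval x (hbPoly n η β)))
        ∈ Rset := by
    intro η β hηβ
    exact ⟨η, β, hηβ, by simp only [hb_eval]⟩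
  have hRne : Rset.Nonempty :=
    ⟨_, hRmem (Pi.single ⟨0, hn⟩ k) 0 (by simp [Finset.sum_pi_single'])⟩
  have hRlb : ∀ r0 ∈ Rset, -M ≤ r0 := by
    rintro r0 ⟨η, β, hηβ, rfl⟩
    simp only [← hb_eval]
    have hd := hb_pos hK hK1 hKpos η β
    rw [le_div_iff₀ hd]
    exact hA (hbPoly n η β) fun x hx => hb_nonneg η β (hK1 hx)
  have hRbdd : BddBelow Rset := ⟨-M, hRlb⟩
  -- facts about Fset
  have hvK : 0 < (volume K).toReal :=
    ENNReal.toReal_pos hKpos.ne' hK.measure_lt_top.ne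
  have hσ0 : (C (volume K).toReal⁻¹ : MvPolynomial (Fin n) ℝ) ∈ SOS n r :=
    sos_const (inv_nonneg.mpr hvK.le)
  have hσ0int : (∫ x in K, eval x (C (volume K).toReal⁻¹ : MvPolynomial (Fin n) ℝ)) = 1 := by
    simp only [eval_C]
    rw [setIntegral_const, smul_eq_mul]; exact mul_inv_cancel₀ hvK.ne'
  have hFne : Fset.Nonempty := ⟨_, _, hσ0, hσ0int, rfl⟩
  have hFlb : ∀ v ∈ Fset, -M ≤ v := by
    rintro v ⟨σ, hσ, h1, rfl⟩
    have := hA σ fun x _ => sos_nonneg hσ x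
    rw [h1] at this; linarith
  have hFbdd : BddBelow Fset := ⟨-M, hFlb⟩
  -- Fset ⊆ Eset
  have hFE : Fset ⊆ Eset := by
    rintro v ⟨σ, hσ, h1, rfl⟩
    exact ⟨0, handelman_zero, σ, hσ, by rwa [zero_add], by rw [zero_add]⟩
  -- each Handelman ratio lies in Eset
  have hEratio : ∀ η β : Fin n → ℕ, (∑ i, η i) + (∑ i, β i) = k →
      ((∫ x in K, eval x f * eval x (hbPoly n η β)) / (∫ x in K, eval x (hbPoly n η β)))
        ∈ Eset := by
    intro η β hηβ
    have hd := hb_pos hK hK1 hKpos η β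
    set d : ℝ := ∫ x in K, eval x (hbPoly n η β) with hdd
    refine ⟨d⁻¹ • hbPoly n η β,
      ⟨{(η, β)}, fun _ => d⁻¹, fun _ _ => inv_nonneg.mpr hd.le,
        fun pr hpr => by rw [Finset.mem_singleton] at hpr; subst hpr; exact hηβ,
        by rw [Finset.sum_singleton]⟩, 0, sos_zero, ?_, ?_⟩
    · rw [add_zero]
      simp only [smul_eval]
      rw [MeasureTheory.integral_const_mul, inv_mul_cancel₀ hd.ne']
    · rw [add_zero]
      simp only [smul_eval]
      have : (fun x : Fin n → ℝ => eval x f * (d⁻¹ * eval x (hbPoly n η β)))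
          = fun x => d⁻¹ * (eval x f * eval x (hbPoly n η β)) := by funext x; ring
      rw [this, MeasureTheory.integral_const_mul, div_eq_inv_mul]
  -- main lower bound for elements of Eset
  have hEv : ∀ v ∈ Eset, min (fsos K f r) (fkH K f k) ≤ v := by
    rintro v ⟨h, ⟨S, lam, hlam0, hlamk, hhS⟩, s, hs, hint1, rfl⟩
    set c : (Fin n → ℕ) × (Fin n → ℕ) → ℝ :=
      fun pr => ∫ x in K, eval x (hbPoly n pr.1 pr.2) with hc
    have hcpos : ∀ pr : (Fin n → ℕ) × (Fin n → ℕ), 0 < c pr :=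
      fun pr => hb_pos hK hK1 hKpos _ _
    set ρ : (Fin n → ℕ) × (Fin n → ℕ) → ℝ :=
      fun pr => (∫ x in K, eval x f * eval x (hbPoly n pr.1 pr.2)) / c pr with hρ
    have hρR : ∀ pr ∈ S, fkH K f k ≤ ρ pr := by
      intro pr hpr
      rw [hfkH]
      exact csInf_le hRbdd (hRmem _ _ (hlamk pr hpr))
    set t : ℝ := ∑ pr ∈ S, lam pr * c pr with ht
    set u : ℝ := ∫ x in K, eval x s with hu
    have ht0 : 0 ≤ t := Finset.sum_nonneg fun pr hpr =>
      mul_nonneg (hlam0 pr hpr) (hcpos pr).le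
    have hu0 : 0 ≤ u := setIntegral_nonneg hmK fun x _ => sos_nonneg hs x
    -- ∫ h = t
    have hIh : (∫ x in K, eval x h) = t := by
      rw [hhS]
      have : (fun x : Fin n → ℝ => eval x (∑ pr ∈ S, lam pr • hbPoly n pr.1 pr.2))
          = fun x => ∑ pr ∈ S, lam pr * eval x (hbPoly n pr.1 pr.2) := by
        funext x; simp [smul_eval]
      rw [this, integral_finset_sum S fun pr _ => ((intK hK _).const_mul _)]
      exact Finset.sum_congr rfl fun pr _ => MeasureTheory.integral_const_mul _ _
    -- ∫ f h = ∑ lam (ρ c)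
    have hIfh : (∫ x in K, eval x f * eval x h) = ∑ pr ∈ S, (lam pr * c pr) * ρ pr := by
      rw [hhS]
      have : (fun x : Fin n → ℝ =>
            eval x f * eval x (∑ pr ∈ S, lam pr • hbPoly n pr.1 pr.2))
          = fun x => ∑ pr ∈ S, lam pr * (eval x f * eval x (hbPoly n pr.1 pr.2)) := by
        funext x
        simp only [map_sum, smul_eval, Finset.mul_sum]
        exact Finset.sum_congr rfl fun pr _ => by ring
      rw [this, integral_finset_sum S fun pr _ => ((hIfp _).const_mul _)]
      refine Finset.sum_congr rfl fun pr _ => ?_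
      rw [MeasureTheory.integral_const_mul]
      have : (∫ x in K, eval x f * eval x (hbPoly n pr.1 pr.2)) = ρ pr * c pr :=
        (div_mul_cancel₀ _ (hcpos pr).ne').symm
      rw [this]; ring
    -- t + u = 1
    have htu : t + u = 1 := by
      rw [← hIh]
      rw [show (fun x : Fin n → ℝ => eval x (h + s))
          = fun x => eval x h + eval x s from funext fun x => by simp] at hint1
      rw [← hint1, integral_add (intK hK h) (intK hK s)]
    -- split the value integral
    have hsplit : (∫ x in K, eval x f * eval x (h + s))
        = (∫ x in K, eval x f * eval x h) + ∫ x in K, eval x f * eval x s := by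
      rw [show (fun x : Fin n → ℝ => eval x f * eval x (h + s))
          = fun x => eval x f * eval x h + eval x f * eval x s
          from funext fun x => by simp [mul_add]]
      exact integral_add (hIfp h) (hIfp s)
    -- h part lower bound
    have hfh : t * fkH K f k ≤ ∫ x in K, eval x f * eval x h := by
      rw [hIfh, ht, Finset.sum_mul]
      refine Finset.sum_le_sum fun pr hpr => ?_
      exact mul_le_mul_of_nonneg_left (hρR pr hpr)
        (mul_nonneg (hlam0 pr hpr) (hcpos pr).le)
    -- s part lower bound
    have hfs : u * fsos K f r ≤ ∫ x in K, eval x f * eval x s := by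
      rcases eq_or_lt_of_le hu0 with h0 | hupos
      · have hz : (∫ x in K, eval x s) = 0 := h0.symm
        have hae : (fun x => eval x s) =ᵐ[volume.restrict K] 0 :=
          (integral_eq_zero_iff_of_nonneg_ae
            (Filter.Eventually.of_forall fun x => sos_nonneg hs x) (intK hK s)).1 hz
        have hae2 : (fun x => eval x f * eval x s)
            =ᵐ[volume.restrict K] (fun _ => (0:ℝ)) :=
          hae.mono fun x hx => by
            simp only [Pi.zero_apply] at hx
            simp only [hx, mul_zero]
        have : (∫ x in K, eval x f * eval x s) = 0 := by
          rw [integral_congr_ae hae2]; simp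
        rw [this, ← h0, zero_mul]
      · set σ' := u⁻¹ • s with hσ'
        have hσ'S : σ' ∈ SOS n r := sos_smul (inv_nonneg.mpr hupos.le) hs
        have hσ'1 : (∫ x in K, eval x σ') = 1 := by
          rw [hσ']
          simp only [smul_eval]
          rw [MeasureTheory.integral_const_mul, ← hu, inv_mul_cancel₀ hupos.ne']
        have hσ'v : (∫ x in K, eval x f * eval x σ')
            = u⁻¹ * ∫ x in K, eval x f * eval x s := by
          rw [hσ']
          simp only [smul_eval]
          rw [show (fun x : Fin n → ℝ => eval x f * (u⁻¹ * eval x s))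
            = fun x => u⁻¹ * (eval x f * eval x s) from funext fun x => by ring]
          rw [MeasureTheory.integral_const_mul]
        have hle : fsos K f r ≤ u⁻¹ * ∫ x in K, eval x f * eval x s := by
          rw [hfsos, ← hσ'v]
          exact csInf_le hFbdd ⟨σ', hσ'S, hσ'1, rfl⟩
        calc u * fsos K f r ≤ u * (u⁻¹ * ∫ x in K, eval x f * eval x s) :=
              mul_le_mul_of_nonneg_left hle hupos.le
          _ = ∫ x in K, eval x f * eval x s := by
              rw [← mul_assoc, mul_inv_cancel₀ hupos.ne', one_mul]
    -- combine
    have hmin : min (fsos K f r) (fkH K f k)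
        ≤ t * fkH K f k + u * fsos K f r := by
      have h1 : t * min (fsos K f r) (fkH K f k) ≤ t * fkH K f k :=
        mul_le_mul_of_nonneg_left (min_le_right _ _) ht0
      have h2 : u * min (fsos K f r) (fkH K f k) ≤ u * fsos K f r :=
        mul_le_mul_of_nonneg_left (min_le_left _ _) hu0
      have h3 : t * min (fsos K f r) (fkH K f k) + u * min (fsos K f r) (fkH K f k)
          = min (fsos K f r) (fkH K f k) := by
        rw [← add_mul, htu, one_mul]
      linarith
    rw [hsplit]
    linarith
  have hEne : Eset.Nonempty := ⟨_, hFE hFne.choose_spec⟩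
  have hEbdd : BddBelow Eset := ⟨min (fsos K f r) (fkH K f k), hEv⟩
  refine le_antisymm (le_min ?_ ?_) (le_csInf hEne hEv)
  · rw [hfsos]
    exact le_csInf hFne fun v hv => csInf_le hEbdd (hFE hv)
  · rw [hfkH]
    refine le_csInf hRne ?_
    rintro r0 ⟨η, β, hηβ, rfl⟩
    simp only [← hb_eval]
    exact csInf_le hEbdd (hEratio η β hηβ)
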